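/- Composite correctness of one tape-move-right update: with notation as above, after writing s' at position 0 and moving the head right, the new encodings are r_new = −4r + (2 s₀ + 1) and l_new = −l/4 + (2 s' + 1)/4, and these equal C⁺(s₁ s₂ …) and C⁻(s' s₋₁ s₋₂ …) respectively. -/

import Mathlib

/-- A real number is a bit: `0` or `1`. -/
def IsBit (x : ℝ) : Prop := x = 0 ∨ x = 1

/-- Cantor-like encoding of the right half-tape of a bi-infinite tape `f : ℤ → ℝ` read
from head position `h`: `C⁺(f_h f_{h+1} …) = ∑_{k≥0} (-1)^k (2 f_{h+k} + 1)/4^(k+1)`. -/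
noncomputable def Cright (f : ℤ → ℝ) (h : ℤ) : ℝ :=
  ∑' k : ℕ, (-1 : ℝ) ^ k * (2 * f (h + k) + 1) / 4 ^ (k + 1)

/-- Cantor-like encoding of the left half-tape of a bi-infinite tape `f : ℤ → ℝ` read
from head position `h`: `C⁻(f_{h-1} f_{h-2} …) = ∑_{k≥1} (-1)^(k+1) (2 f_{h-k} + 1)/4^k`. -/
noncomputable def Cleft (f : ℤ → ℝ) (h : ℤ) : ℝ :=
  ∑' k : ℕ, (-1 : ℝ) ^ k * (2 * f (h - (k + 1)) + 1) / 4 ^ (k + 1)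

/-!
Both encodings are alternating series in powers of `1/4` with bounded coefficients, so peeling
off the first term gives the one-cell recursions `C⁺(s_h …) = (2 s_h + 1 - C⁺(s_{h+1} …)) / 4`
and `C⁻(s_{h-1} …) = (2 s_{h-1} + 1 - C⁻(s_{h-2} …)) / 4`. Moving the head right reads the first
recursion backwards at `h = 0` and the second forwards at `h = 1`; the written cell `s'` only
enters the second one, since `C⁺` and `C⁻` at a head position see only the cells to its right,
respectively left.
-/

lemma IsBit.abs_le_one {x : ℝ} (hx : IsBit x) : |x| ≤ 1 := by
  rcases hx with rfl | rfl <;> norm_num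

lemma summable_alternating_div_four_pow {a : ℕ → ℝ} {C : ℝ} (ha : ∀ k, |a k| ≤ C) :
    Summable fun k : ℕ => (-1 : ℝ) ^ k * a k / 4 ^ (k + 1) := by
  refine Summable.of_norm_bounded
    ((summable_geometric_of_lt_one (by norm_num) (by norm_num : (1 / 4 : ℝ) < 1)).mul_left C)
    fun k => ?_
  rw [Real.norm_eq_abs, abs_div, abs_mul, abs_pow, abs_neg, abs_one, one_pow, one_mul,
    abs_of_pos (by positivity : (0 : ℝ) < 4 ^ (k + 1)), one_div_pow, mul_one_div]
  exact div_le_div₀ ((abs_nonneg _).trans (ha k)) (ha k) (by positivity)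
    (pow_le_pow_right₀ (by norm_num : (1 : ℝ) ≤ 4) k.le_succ)

lemma tsum_alternating_div_four_pow_eq {a : ℕ → ℝ}
    (ha : Summable fun k : ℕ => (-1 : ℝ) ^ k * a k / 4 ^ (k + 1)) :
    ∑' k : ℕ, (-1 : ℝ) ^ k * a k / 4 ^ (k + 1) =
      (a 0 - ∑' k : ℕ, (-1 : ℝ) ^ k * a (k + 1) / 4 ^ (k + 1)) / 4 := by
  rw [ha.tsum_eq_zero_add, sub_div, ← tsum_div_const, sub_eq_add_neg, ← tsum_neg]
  congr 1
  · norm_num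
  · congr 1
    funext k
    rw [pow_succ, pow_succ (4 : ℝ) (k + 1)]
    ring

section Tape

variable {f g : ℤ → ℝ} {C : ℝ}

lemma abs_two_mul_add_one_le (hf : ∀ n, |f n| ≤ C) (n : ℤ) : |2 * f n + 1| ≤ 2 * C + 1 := by
  calc |2 * f n + 1| ≤ |2 * f n| + |1| := abs_add_le _ _
    _ ≤ 2 * C + 1 := by rw [abs_mul, abs_two, abs_one]; linarith [hf n]

lemma Cright_eq (hf : ∀ n, |f n| ≤ C) (h : ℤ) :
    Cright f h = (2 * f h + 1 - Cright f (h + 1)) / 4 := by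
  have hshift (k : ℕ) : h + ((k + 1 : ℕ) : ℤ) = h + 1 + k := by push_cast; ring
  unfold Cright
  rw [tsum_alternating_div_four_pow_eq
    (summable_alternating_div_four_pow fun k => abs_two_mul_add_one_le hf _),
    Nat.cast_zero, add_zero]
  simp only [hshift]

lemma Cleft_eq (hf : ∀ n, |f n| ≤ C) (h : ℤ) :
    Cleft f h = (2 * f (h - 1) + 1 - Cleft f (h - 1)) / 4 := by
  have hshift (k : ℕ) : h - (((k + 1 : ℕ) : ℤ) + 1) = h - 1 - (k + 1) := by push_cast; ring
  unfold Cleft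
  rw [tsum_alternating_div_four_pow_eq
    (summable_alternating_div_four_pow fun k => abs_two_mul_add_one_le hf _),
    Nat.cast_zero, zero_add]
  simp only [hshift]

lemma Cright_congr {h : ℤ} (hfg : ∀ n, h ≤ n → f n = g n) : Cright f h = Cright g h := by
  unfold Cright
  congr 1 with k
  rw [hfg _ (by omega)]

lemma Cleft_congr {h : ℤ} (hfg : ∀ n, n < h → f n = g n) : Cleft f h = Cleft g h := by
  unfold Cleft
  congr 1 with k
  rw [hfg _ (by omega)]

end Tape

theorem tape_move_right_update (s : ℤ → ℝ) (hs : ∀ n, IsBit (s n)) (s' : ℝ) (hs' : IsBit s') :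
    let r := Cright s 0
    let l := Cleft s 0
    let t : ℤ → ℝ := fun n => if n = 0 then s' else s n
    (-4 * r + (2 * s 0 + 1) = Cright t 1) ∧
    (-l / 4 + (2 * s' + 1) / 4 = Cleft t 1) := by
  intro r l t
  have hs_le : ∀ n, |s n| ≤ 1 := fun n => (hs n).abs_le_one
  have ht_le : ∀ n, |t n| ≤ 1 := fun n => by
    dsimp only [t]
    split_ifs
    exacts [hs'.abs_le_one, hs_le n]
  have ht_right : Cright t 1 = Cright s 1 :=
    Cright_congr fun n hn => if_neg (by omega)
  have ht_left : Cleft t 0 = Cleft s 0 :=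
    Cleft_congr fun n hn => if_neg (by omega)
  constructor
  · rw [ht_right, show r = _ from Cright_eq hs_le 0, zero_add]
    ring
  · rw [Cleft_eq ht_le 1, sub_self, ht_left, show t 0 = s' from if_pos rfl]
    ring
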